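/- A permutation π of the basis {1, a, b, c, P, Q} of the fusion ring R of ad(D_10) extends to a ring automorphism of R if and only if π fixes 1, b and c and permutes the three elements a, P, Q among themselves. Consequently, the group of based automorphisms of R is isomorphic to the symmetric group S_3, acting by arbitrary permutations of {a, P, Q}. -/

import Mathlib

/-!
A based automorphism of a ring with a `ℤ`-basis is the same thing as a permutation of the basis
preserving the structure constants `N_ij^k`. For `ad(D_10)` such a permutation must fix the unit
`1`, then `c`, the only basis element with `N_cc^c = 2`, and then `b`, the only one with
`N_bc^b = 1`; conversely a finite check shows that each of the six permutations of `{a, P, Q}`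
preserves the table. Transporting `S_3` along these permutations gives the group of based
automorphisms.
-/

open Equiv Module

theorem Equiv.Perm.mem_range_extendDomainHom_iff {α β : Type*} {p : β → Prop} [DecidablePred p]
    (f : α ≃ Subtype p) {g : Perm β} :
    g ∈ (extendDomainHom f).range ↔ ∀ b, ¬p b → g b = b := by
  constructor
  · rintro ⟨e, rfl⟩ b hb
    exact extendDomain_apply_not_subtype e f hb
  · intro hg
    have hp : ∀ b, p (g b) ↔ p b := fun b => by
      by_cases hb : p b
      · refine iff_of_true (by_contra fun hgb => hgb ?_) hb
        rwa [g.injective (hg _ hgb)]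
      · rw [hg b hb]
    refine ⟨f.permCongr.symm (g.subtypePerm hp), Equiv.ext fun b => ?_⟩
    by_cases hb : p b
    · simp [extendDomain_apply_subtype _ _ hb]
    · simp [extendDomain_apply_not_subtype _ _ hb, hg b hb]

theorem LinearMap.map_mul_of_map_mul_basis {ι S A : Type*} [CommSemiring S]
    [NonUnitalNonAssocSemiring A] [Module S A] [SMulCommClass S A A] [IsScalarTower S A A]
    (B : Basis ι S A) (L : A →ₗ[S] A) (h : ∀ i j, L (B i * B j) = L (B i) * L (B j)) (x y : A) :
    L (x * y) = L x * L y := by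
  have : (LinearMap.mul S A).compr₂ L = (LinearMap.mul S A).compl₁₂ L L :=
    LinearMap.ext_basis B B h
  exact LinearMap.congr_fun₂ this x y

namespace Module.Basis

theorem repr_apply_perm {ι S M : Type*} [Semiring S] [AddCommMonoid M] [Module S M]
    (B : Basis ι S M) (L : M ≃ₗ[S] M) {π : Perm ι} (hL : ∀ i, L (B i) = B (π i)) (x : M) (k : ι) :
    B.repr (L x) (π k) = B.repr x k := by
  have hmap : B.map L = B.reindex π.symm := by
    ext i
    simp [hL]
  calc B.repr (L x) (π k) = (B.reindex π.symm).repr (L x) k := by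
        rw [repr_reindex_apply, symm_symm]
    _ = B.repr x k := by simp [← hmap]

section StructureConstants

variable {ι R : Type*} [NonUnitalNonAssocRing R] (B : Basis ι ℤ R)

def structureConstPerms : Subgroup (Perm ι) where
  carrier := {π | ∀ i j k, B.repr (B (π i) * B (π j)) (π k) = B.repr (B i * B j) k}
  one_mem' := fun _ _ _ => rfl
  mul_mem' := fun {π σ} hπ hσ i j k => (hπ (σ i) (σ j) (σ k)).trans (hσ i j k)
  inv_mem' := fun {π} hπ i j k => by
    simpa using (hπ (π⁻¹ i) (π⁻¹ j) (π⁻¹ k)).symm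

variable {B}

theorem mem_structureConstPerms {π : Perm ι} :
    π ∈ B.structureConstPerms ↔
      ∀ i j k, B.repr (B (π i) * B (π j)) (π k) = B.repr (B i * B j) k :=
  Iff.rfl

theorem mem_structureConstPerms_of_ringEquiv (f : R ≃+* R) {π : Perm ι}
    (hf : ∀ i, f (B i) = B (π i)) : π ∈ B.structureConstPerms := fun i j k => by
  rw [← hf, ← hf, ← map_mul]
  exact B.repr_apply_perm f.toAddEquiv.toIntLinearEquiv hf _ k

noncomputable def ringEquivOfPerm {π : Perm ι} (hπ : π ∈ B.structureConstPerms) : R ≃+* R :=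
  { B.equiv B π with
    map_mul' := by
      refine (B.equiv B π).toLinearMap.map_mul_of_map_mul_basis B fun i j => ?_
      refine B.ext_elem fun k => ?_
      obtain ⟨k, rfl⟩ := π.surjective k
      simpa [B.repr_apply_perm (B.equiv B π) (fun i => B.equiv_apply i B π)] using (hπ i j k).symm }

@[simp]
theorem ringEquivOfPerm_apply_basis {π : Perm ι} (hπ : π ∈ B.structureConstPerms) (i : ι) :
    ringEquivOfPerm hπ (B i) = B (π i) :=
  B.equiv_apply i B π

theorem exists_ringEquiv_iff_mem_structureConstPerms {π : Perm ι} :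
    (∃ f : R ≃+* R, ∀ i, f (B i) = B (π i)) ↔ π ∈ B.structureConstPerms :=
  ⟨fun ⟨f, hf⟩ => mem_structureConstPerms_of_ringEquiv f hf,
    fun hπ => ⟨ringEquivOfPerm hπ, ringEquivOfPerm_apply_basis hπ⟩⟩

variable (B)

theorem ringEquiv_ext {f g : R ≃+* R} (h : ∀ i, f (B i) = g (B i)) : f = g := by
  have : f.toAddEquiv.toIntLinearEquiv = g.toAddEquiv.toIntLinearEquiv := B.ext' h
  exact RingEquiv.ext (LinearEquiv.congr_fun this)

noncomputable def structureConstPermsHom : B.structureConstPerms →* RingAut R where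
  toFun π := ringEquivOfPerm π.2
  map_one' := B.ringEquiv_ext fun i => by simp
  map_mul' π σ := B.ringEquiv_ext fun i => by simp

@[simp]
theorem structureConstPermsHom_apply_basis (π : B.structureConstPerms) (i : ι) :
    B.structureConstPermsHom π (B i) = B (π.1 i) :=
  ringEquivOfPerm_apply_basis π.2 i

theorem structureConstPermsHom_injective : Function.Injective B.structureConstPermsHom :=
  fun π σ h => Subtype.ext <| Equiv.ext fun i => B.injective <| by
    simpa using RingEquiv.congr_fun h (B i)

end StructureConstants

end Module.Basis

/-- `adD10Table i j k` is the coefficient of the `k`-th basis element in the product of the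
`i`-th and `j`-th ones, in the order `1, a, b, c, P, Q`. -/
def adD10Table : Fin 6 → Fin 6 → Fin 6 → ℤ :=
  ![![![1, 0, 0, 0, 0, 0], ![0, 1, 0, 0, 0, 0], ![0, 0, 1, 0, 0, 0],
      ![0, 0, 0, 1, 0, 0], ![0, 0, 0, 0, 1, 0], ![0, 0, 0, 0, 0, 1]],
    ![![0, 1, 0, 0, 0, 0], ![1, 1, 1, 0, 0, 0], ![0, 1, 1, 1, 0, 0],
      ![0, 0, 1, 1, 1, 1], ![0, 0, 0, 1, 0, 1], ![0, 0, 0, 1, 1, 0]],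
    ![![0, 0, 1, 0, 0, 0], ![0, 1, 1, 1, 0, 0], ![1, 1, 1, 1, 1, 1],
      ![0, 1, 1, 2, 1, 1], ![0, 0, 1, 1, 1, 0], ![0, 0, 1, 1, 0, 1]],
    ![![0, 0, 0, 1, 0, 0], ![0, 0, 1, 1, 1, 1], ![0, 1, 1, 2, 1, 1],
      ![1, 1, 2, 2, 1, 1], ![0, 1, 1, 1, 0, 1], ![0, 1, 1, 1, 1, 0]],
    ![![0, 0, 0, 0, 1, 0], ![0, 0, 0, 1, 0, 1], ![0, 0, 1, 1, 1, 0],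
      ![0, 1, 1, 1, 0, 1], ![1, 0, 1, 0, 1, 0], ![0, 1, 0, 1, 0, 0]],
    ![![0, 0, 0, 0, 0, 1], ![0, 0, 0, 1, 1, 0], ![0, 0, 1, 1, 0, 1],
      ![0, 1, 1, 1, 1, 0], ![0, 1, 0, 1, 0, 0], ![1, 0, 1, 0, 0, 1]]]

theorem adD10Table_comm (i j : Fin 6) : adD10Table i j = adD10Table j i := by
  revert i j; decide

def adD10Embedding : Fin 3 ↪ Fin 6 := ⟨![1, 4, 5], by decide⟩

def adD10PermHom : Perm (Fin 3) →* Perm (Fin 6) :=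
  Perm.extendDomainHom adD10Embedding.toEquivRange

theorem adD10PermHom_injective : Function.Injective adD10PermHom :=
  Perm.extendDomainHom_injective _

theorem adD10PermHom_apply_embedding (g : Perm (Fin 3)) (j : Fin 3) :
    adD10PermHom g (adD10Embedding j) = adD10Embedding (g j) :=
  Perm.viaFintypeEmbedding_apply_image g adD10Embedding j

theorem mem_range_adD10PermHom_iff {π : Perm (Fin 6)} :
    π ∈ adD10PermHom.range ↔ π 0 = 0 ∧ π 2 = 2 ∧ π 3 = 3 := by
  have hcompl : ∀ b, b ∉ Set.range adD10Embedding ↔ b = 0 ∨ b = 2 ∨ b = 3 := by decide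
  simp only [adD10PermHom, Perm.mem_range_extendDomainHom_iff, hcompl, or_imp, forall_and,
    forall_eq]

theorem adD10Table_perm_invariant (g : Perm (Fin 3)) (i j k : Fin 6) :
    adD10Table (adD10PermHom g i) (adD10PermHom g j) (adD10PermHom g k) = adD10Table i j k := by
  revert g i j k
  -- the elaborator's `decide` cannot evaluate through `Perm (Fin 3)` in time; the kernel can
  decide +kernel

theorem adD10Table_perm_invariant_iff (π : Perm (Fin 6)) :
    (∀ i j k, adD10Table (π i) (π j) (π k) = adD10Table i j k) ↔
      π 0 = 0 ∧ π 2 = 2 ∧ π 3 = 3 := by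
  constructor
  · intro h
    have unit_unique : ∀ x, (∀ y, adD10Table x y y = 1) → x = 0 := by decide
    have diag_eq_two : ∀ x, adD10Table x x x = 2 → x = 3 := by decide
    have coeff_eq_one : ∀ x, adD10Table x 3 x = 1 → x = 2 := by decide
    have h3 : π 3 = 3 := diag_eq_two _ (h 3 3 3)
    have h2 : π 2 = 2 := coeff_eq_one _ (by rw [← h3]; exact h 2 3 2)
    refine ⟨unit_unique _ fun y => ?_, h2, h3⟩
    obtain ⟨j, rfl⟩ := π.surjective y
    rw [h 0 j j]
    revert j
    decide
  · intro hfix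
    obtain ⟨g, rfl⟩ := mem_range_adD10PermHom_iff.2 hfix
    exact adD10Table_perm_invariant g

/-- Let `R` be (a realization of) the fusion ring of `ad(D_10)`: a
commutative ring, free as a `ℤ`-module with basis `1 = B 0, a = B 1, b = B 2, c = B 3,
P = B 4, Q = B 5` and the stated multiplication table.  A permutation `π` of the basis
extends to a ring automorphism of `R` iff `π` fixes `1, b, c` (hence permutes `a, P, Q`
among themselves); consequently the group of based automorphisms of `R` is isomorphic to
`S_3`, acting by arbitrary permutations of `{a, P, Q}`. -/
theorem adD10_based_automorphism_group
    {R : Type*} [CommRing R] (B : Module.Basis (Fin 6) ℤ R)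
    (h1 : B 0 = 1)
    (haa : B 1 * B 1 = B 0 + B 1 + B 2)
    (hab : B 1 * B 2 = B 1 + B 2 + B 3)
    (hac : B 1 * B 3 = B 2 + B 3 + B 4 + B 5)
    (haP : B 1 * B 4 = B 3 + B 5)
    (haQ : B 1 * B 5 = B 3 + B 4)
    (hbb : B 2 * B 2 = B 0 + B 1 + B 2 + B 3 + B 4 + B 5)
    (hbc : B 2 * B 3 = B 1 + B 2 + (2 : ℤ) • B 3 + B 4 + B 5)
    (hbP : B 2 * B 4 = B 2 + B 3 + B 4)
    (hbQ : B 2 * B 5 = B 2 + B 3 + B 5)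
    (hcc : B 3 * B 3 = B 0 + B 1 + (2 : ℤ) • B 2 + (2 : ℤ) • B 3 + B 4 + B 5)
    (hcP : B 3 * B 4 = B 1 + B 2 + B 3 + B 5)
    (hcQ : B 3 * B 5 = B 1 + B 2 + B 3 + B 4)
    (hPP : B 4 * B 4 = B 0 + B 2 + B 4)
    (hQQ : B 5 * B 5 = B 0 + B 2 + B 5)
    (hPQ : B 4 * B 5 = B 1 + B 3) :
    (∀ π : Equiv.Perm (Fin 6),
      (∃ f : RingAut R, ∀ i : Fin 6, f (B i) = B (π i)) ↔
        (π 0 = 0 ∧ π 2 = 2 ∧ π 3 = 3)) ∧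
    ∃ Φ : Equiv.Perm (Fin 3) →* RingAut R,
      Function.Injective Φ ∧
      (∀ f : RingAut R,
        (∃ π : Equiv.Perm (Fin 6), ∀ i : Fin 6, f (B i) = B (π i)) ↔
          f ∈ Set.range Φ) ∧
      (∀ g : Equiv.Perm (Fin 3), ∀ j : Fin 3,
        Φ g (B (![1, 4, 5] j)) = B (![1, 4, 5] (g j))) := by
  have hmul : ∀ i j, B i * B j = ∑ k, adD10Table i j k • B k := by
    intro i j
    wlog hij : i ≤ j generalizing i j
    · rw [mul_comm, this j i (le_of_not_ge hij), adD10Table_comm]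
    fin_cases i <;> fin_cases j <;> simp [Fin.sum_univ_six, adD10Table, h1, haa, hab, hac, haP,
      haQ, hbb, hbc, hbP, hbQ, hcc, hcP, hcQ, hPP, hQQ, hPQ] at hij ⊢
  have hmem : ∀ π, π ∈ B.structureConstPerms ↔ π 0 = 0 ∧ π 2 = 2 ∧ π 3 = 3 := fun π => by
    simp only [Basis.mem_structureConstPerms, hmul, B.repr_sum_self, adD10Table_perm_invariant_iff]
  have hρ : ∀ g, adD10PermHom g ∈ B.structureConstPerms := fun g =>
    (hmem _).2 (mem_range_adD10PermHom_iff.1 ⟨g, rfl⟩)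
  let Φ := B.structureConstPermsHom.comp (adD10PermHom.codRestrict _ hρ)
  refine ⟨fun π => Basis.exists_ringEquiv_iff_mem_structureConstPerms.trans (hmem π), Φ,
    B.structureConstPermsHom_injective.comp fun g h hgh =>
      adD10PermHom_injective (congrArg Subtype.val hgh), fun f => ⟨?_, ?_⟩, fun g j => ?_⟩
  · rintro ⟨π, hf⟩
    obtain ⟨g, rfl⟩ := mem_range_adD10PermHom_iff.2
      ((hmem π).1 (Basis.mem_structureConstPerms_of_ringEquiv f hf))
    exact ⟨g, B.ringEquiv_ext fun i => by simp [Φ, hf]⟩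
  · rintro ⟨g, rfl⟩
    exact ⟨adD10PermHom g, fun i => by simp [Φ]⟩
  · show Φ g (B (adD10Embedding j)) = B (adD10Embedding (g j))
    simp [Φ, adD10PermHom_apply_embedding]
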